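/- arXiv:1005.3246 — 2 statements merged into one kernel-verified Lean document; each statement's English description precedes it below -/
import Mathlib

section
/- The one-point compactification of a product of two locally compact Hausdorff spaces X and Y is homeomorphic to the smash product X* ∧ Y* of their one-point compactifications (with the points at infinity as basepoints). -/
open OnePoint
/-- The "wedge collapse" relation on the product of the one-point compactifications
`X* × Y*`: two points are identified iff they are equal or both lie in the wedge
`X* × {∞} ∪ {∞} × Y*`. -/
def wedgeSetoid (X Y : Type*) [TopologicalSpace X] [TopologicalSpace Y] :
    Setoid (OnePoint X × OnePoint Y) where
  r a b := a = b ∨ ((a.1 = ∞ ∨ a.2 = ∞) ∧ (b.1 = ∞ ∨ b.2 = ∞))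
  iseqv := by
    constructor
    · intro a; exact Or.inl rfl
    · intro a b h; tauto
    · intro a b c hab hbc; rcases hab with rfl | h <;> rcases hbc with rfl | h' <;> tauto

/-- The smash product `X* ∧ Y*` of the one-point compactifications of `X` and `Y`,
with the points at infinity as basepoints: the quotient of `X* × Y*` by the wedge. -/
def OnePointSmash (X Y : Type*) [TopologicalSpace X] [TopologicalSpace Y] : Type _ :=
  Quotient (wedgeSetoid X Y)

instance (X Y : Type*) [TopologicalSpace X] [TopologicalSpace Y] :
    TopologicalSpace (OnePointSmash X Y) :=
  instTopologicalSpaceQuotient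

/-!
Collapsing the wedge `X* × {∞} ∪ {∞} × Y*` to a point gives a map `X* ∧ Y* → (X × Y)*`, which is
a bijection. It is continuous because `X × Y` sits in the Hausdorff space `X* × Y*` as an open
subspace, and collapsing the complement of an open subspace `W` of a Hausdorff space onto the
point at infinity of `W*` is continuous: compact subsets of `W` stay closed in the big space.
A continuous bijection from a compact space to a Hausdorff space is a homeomorphism.
-/

open Set Topology

namespace OnePoint

variable {Z W : Type*}

lemma preimage_eq_image_of_infty_notMem {e : W → Z} (he : e.Injective) {f : Z → OnePoint W}
    (hfe : ∀ w, f (e w) = w) (hf : ∀ z ∉ range e, f z = ∞) {s : Set (OnePoint W)}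
    (hs : ∞ ∉ s) : f ⁻¹' s = e '' ((↑) ⁻¹' s) := by
  ext z
  by_cases hz : z ∈ range e
  · obtain ⟨w, rfl⟩ := hz
    simp [hfe, he.mem_set_image]
  · simp only [mem_preimage, hf z hz, hs, false_iff]
    exact fun ⟨w, _, hw⟩ => hz ⟨w, hw⟩

theorem continuous_of_isOpenEmbedding [TopologicalSpace Z] [TopologicalSpace W] [T2Space Z]
    {e : W → Z} (he : IsOpenEmbedding e) {f : Z → OnePoint W} (hfe : ∀ w, f (e w) = w) (hf : ∀ z ∉ range e, f z = ∞) :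
    Continuous f := by
  refine continuous_def.2 fun s hs => ?_
  by_cases h : ∞ ∈ s
  · have hK : IsCompact ((↑) ⁻¹' s : Set W)ᶜ := ((isOpen_iff_of_mem' h).mp hs).1
    rw [← isClosed_compl_iff, ← preimage_compl,
      preimage_eq_image_of_infty_notMem he.injective hfe hf (notMem_compl_iff.2 h)]
    exact (hK.image he.continuous).isClosed
  · rw [preimage_eq_image_of_infty_notMem he.injective hfe hf h]
    exact he.isOpenMap _ ((isOpen_iff_of_notMem h).mp hs)

end OnePoint

namespace OnePointSmash

variable {X Y : Type*}

def wedgeCollapse (p : OnePoint X × OnePoint Y) : OnePoint (X × Y) :=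
  p.1.elim ∞ fun x => p.2.elim ∞ fun y => ((x, y) : X × Y)

lemma wedgeCollapse_eq_infty_iff (p : OnePoint X × OnePoint Y) :
    wedgeCollapse p = ∞ ↔ p.1 = ∞ ∨ p.2 = ∞ := by
  obtain ⟨a, b⟩ := p
  cases a <;> cases b <;> simp [wedgeCollapse]

variable [TopologicalSpace X] [TopologicalSpace Y]

theorem continuous_wedgeCollapse [LocallyCompactSpace X] [T2Space X] [LocallyCompactSpace Y]
    [T2Space Y] : Continuous (wedgeCollapse : OnePoint X × OnePoint Y → OnePoint (X × Y)) := by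
  refine continuous_of_isOpenEmbedding (isOpenEmbedding_coe.prodMap isOpenEmbedding_coe)
    (f := wedgeCollapse) (fun (_ : X × Y) => rfl)
    fun ⟨a, b⟩ hp => (wedgeCollapse_eq_infty_iff _).2 ?_
  cases a with
  | infty => exact Or.inl rfl
  | coe x =>
    cases b with
    | infty => exact Or.inr rfl
    | coe y => exact absurd ⟨(x, y), rfl⟩ hp

def toOnePointProd : OnePointSmash X Y → OnePoint (X × Y) :=
  Quotient.lift wedgeCollapse fun a b h => by
    rcases h with rfl | ⟨ha, hb⟩
    · rfl
    · rw [(wedgeCollapse_eq_infty_iff a).2 ha, (wedgeCollapse_eq_infty_iff b).2 hb]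

def ofOnePointProd (p : OnePoint (X × Y)) : OnePointSmash X Y :=
  p.elim (Quotient.mk _ (∞, ∞)) fun p => Quotient.mk _ ((p.1 : OnePoint X), (p.2 : OnePoint Y))

lemma ofOnePointProd_eq_basepoint {p : OnePoint X × OnePoint Y} (hp : p.1 = ∞ ∨ p.2 = ∞) :
    (ofOnePointProd ∞ : OnePointSmash X Y) = Quotient.mk _ p :=
  Quotient.sound (Or.inr ⟨Or.inl rfl, hp⟩)

def equivOnePointProd : OnePointSmash X Y ≃ OnePoint (X × Y) where
  toFun := toOnePointProd
  invFun := ofOnePointProd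
  left_inv := by
    rintro ⟨a, b⟩
    cases a with
    | infty => exact ofOnePointProd_eq_basepoint (Or.inl rfl)
    | coe x =>
      cases b with
      | infty => exact ofOnePointProd_eq_basepoint (Or.inr rfl)
      | coe y => rfl
  right_inv := by
    intro p
    cases p <;> rfl

instance : CompactSpace (OnePointSmash X Y) :=
  Quotient.compactSpace

variable [LocallyCompactSpace X] [T2Space X] [LocallyCompactSpace Y] [T2Space Y]

theorem continuous_equivOnePointProd :
    Continuous (equivOnePointProd : OnePointSmash X Y ≃ OnePoint (X × Y)) :=
  continuous_wedgeCollapse.quotient_lift _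

noncomputable def homeomorphOnePointProd : OnePointSmash X Y ≃ₜ OnePoint (X × Y) :=
  continuous_equivOnePointProd.homeoOfEquivCompactToT2

end OnePointSmash

/-- For locally compact Hausdorff spaces `X` and `Y`, the one-point
compactification `(X × Y)*` is homeomorphic to the smash product `X* ∧ Y*`, via a
homeomorphism sending the point at infinity to the basepoint and `(x, y)` to the
class of `(x, y)`. -/
theorem onePoint_prod_homeomorph_smash (X Y : Type*) [TopologicalSpace X] [TopologicalSpace Y]
    [LocallyCompactSpace X] [T2Space X] [LocallyCompactSpace Y] [T2Space Y] :
    ∃ h : OnePoint (X × Y) ≃ₜ OnePointSmash X Y,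
      h ∞ = Quotient.mk (wedgeSetoid X Y) (∞, ∞) ∧
      ∀ x : X, ∀ y : Y,
        h (OnePoint.some (x, y)) =
          Quotient.mk (wedgeSetoid X Y) (OnePoint.some x, OnePoint.some y) := by
  exact ⟨OnePointSmash.homeomorphOnePointProd.symm, rfl, fun _ _ => rfl⟩
end

section
/- For a continuous family L : Λ → Φ_0(X, Y) of Fredholm operators of index 0 on Banach spaces, parametrized by a compact space Λ, there exists a finite-dimensional subspace V ⊆ Y such that Im L_λ + V = Y for all λ ∈ Λ, and then E_λ = L_λ^{-1}(V) defines a (finite-rank) vector bundle over Λ. -/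
/-!
A surjection `A₀` with a continuous right inverse `S` stays surjective nearby: `A ∘ S` is a unit
for `A` close to `A₀`, and `S ∘ (A ∘ S)⁻¹` is then a right inverse of `A` with the same range as
`S`. Two right inverses with a common range make the projections `x ↦ x - S (A x)` mutually
inverse between the kernels. Applied to `λ ↦ Q ∘ L_λ`, with `Q : Y → Y ⧸ V` the quotient map, so
that `ker (Q ∘ L_λ) = L_λ⁻¹(V)`, this trivializes `E` near every point.

To find `V`, add to `L_{λ₀}` a finite-dimensional complement `V₀` of its range: `X × V₀ → Y`,
`(x, v) ↦ L_{λ₀} x + v` is onto with finite-dimensional kernel, so it stays onto near `λ₀`, and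
by compactness finitely many such `V₀` span a `V` that works everywhere. The dimension of
`L_λ⁻¹(V)` comes from rank–nullity along `0 → ker L_λ → L_λ⁻¹(V) → V → Y ⧸ Im L_λ → 0`.
-/

open Set

variable {X Y : Type*} [NormedAddCommGroup X] [NormedSpace ℝ X] [CompleteSpace X]
  [NormedAddCommGroup Y] [NormedSpace ℝ Y] [CompleteSpace Y]

/-- A bounded operator between Banach spaces is Fredholm of index `0`: finite-dimensional
kernel, closed range, finite-dimensional cokernel, and `dim ker = dim coker`. -/
def IsFredholmIdxZero (T : X →L[ℝ] Y) : Prop :=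
  FiniteDimensional ℝ (LinearMap.ker (T : X →ₗ[ℝ] Y)) ∧
  IsClosed (LinearMap.range (T : X →ₗ[ℝ] Y) : Set Y) ∧
  FiniteDimensional ℝ (Y ⧸ LinearMap.range (T : X →ₗ[ℝ] Y)) ∧
  Module.finrank ℝ (LinearMap.ker (T : X →ₗ[ℝ] Y)) =
    Module.finrank ℝ (Y ⧸ LinearMap.range (T : X →ₗ[ℝ] Y))

open Function Module Filter Topology

section Algebra

variable {K M N : Type*} [Field K] [AddCommGroup M] [Module K M] [AddCommGroup N] [Module K N]

theorem Submodule.finiteDimensional_comap (f : M →ₗ[K] N) (V : Submodule K N)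
    [FiniteDimensional K (LinearMap.ker f)] [FiniteDimensional K V] :
    FiniteDimensional K (V.comap f) := by
  refine Module.Finite.iff_fg.2 (Submodule.fg_of_fg_map_of_fg_inf_ker f ?_ ?_)
  · exact Module.Finite.iff_fg.1 (Submodule.finiteDimensional_of_le (Submodule.map_comap_le f V))
  · exact Module.Finite.iff_fg.1 (Submodule.finiteDimensional_of_le inf_le_right)

theorem finrank_comap_add_finrank_quotient_range (f : M →ₗ[K] N) (V : Submodule K N)
    [FiniteDimensional K (LinearMap.ker f)] [FiniteDimensional K V]
    (hV : LinearMap.range f ⊔ V = ⊤) :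
    finrank K (V.comap f) + finrank K (N ⧸ LinearMap.range f) =
      finrank K V + finrank K (LinearMap.ker f) := by
  have := V.finiteDimensional_comap f
  let f' : V.comap f →ₗ[K] V := f.restrict fun _ hx ↦ hx
  let g : V →ₗ[K] N ⧸ LinearMap.range f := (LinearMap.range f).mkQ ∘ₗ V.subtype
  have hexact : LinearMap.range f' = LinearMap.ker g := by
    ext ⟨y, hy⟩
    simp only [f', g, LinearMap.range_restrict, Submodule.mem_comap, Submodule.mem_map,
      Submodule.coe_subtype, LinearMap.mem_ker, LinearMap.coe_comp, comp_apply,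
      Submodule.mkQ_apply, Submodule.Quotient.mk_eq_zero, LinearMap.mem_range]
    exact ⟨fun ⟨x, _, hx⟩ ↦ ⟨x, hx⟩, fun ⟨x, hx⟩ ↦ ⟨x, hx ▸ hy, hx⟩⟩
  have hg : LinearMap.range g = ⊤ := by
    rw [LinearMap.range_comp, Submodule.range_subtype, Submodule.map_mkQ_eq_top, hV]
  have hker : finrank K (LinearMap.ker f') = finrank K (LinearMap.ker f) := by
    rw [LinearMap.ker_restrict]
    exact (Submodule.comapSubtypeEquivOfLe fun x hx ↦
      by simp [LinearMap.mem_ker.1 hx]).finrank_eq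
  have h₁ := f'.finrank_range_add_finrank_ker
  have h₂ := g.finrank_range_add_finrank_ker
  rw [hexact, hker] at h₁
  rw [hg, finrank_top] at h₂
  omega

end Algebra

section RightInverse

variable {R M N : Type*} [Ring R] [AddCommGroup M] [Module R M] [AddCommGroup N] [Module R N]

/-- `x ↦ x - S (A x)` is the projection onto `ker A` along `range S`. -/
theorem LinearMap.bijOn_ker_of_range_rightInverse_eq {A A' : M →ₗ[R] N} {S S' : N →ₗ[R] M}
    (hS : RightInverse S A) (hS' : RightInverse S' A')
    (hrange : LinearMap.range S = LinearMap.range S') :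
    BijOn (fun x ↦ x - S' (A' x)) (LinearMap.ker A) (LinearMap.ker A') := by
  have hproj : ∀ {A : M →ₗ[R] N} {S : N →ₗ[R] M}, RightInverse S A →
      ∀ x ∈ LinearMap.range S, S (A x) = x := by
    rintro A S hS _ ⟨y, rfl⟩
    rw [hS y]
  have hmaps : ∀ {A : M →ₗ[R] N} {S : N →ₗ[R] M}, RightInverse S A →
      ∀ x, x - S (A x) ∈ LinearMap.ker A := by
    intro A S hS x
    rw [LinearMap.mem_ker, map_sub, hS (A x), sub_self]
  refine InvOn.bijOn (f' := fun x ↦ x - S (A x)) ⟨fun x hx ↦ ?_, fun x hx ↦ ?_⟩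
    (fun x _ ↦ hmaps hS' x) (fun x _ ↦ hmaps hS x)
  · have hx : A x = 0 := hx
    simp [hx, hproj hS _ (hrange ▸ LinearMap.mem_range_self S' (A' x))]
  · have hx : A' x = 0 := hx
    simp [hx, hproj hS' _ (hrange ▸ LinearMap.mem_range_self S (A x))]

end RightInverse

section Perturbation

variable {𝕜 E F : Type*} [NontriviallyNormedField 𝕜] [NormedAddCommGroup E] [NormedSpace 𝕜 E]
  [NormedAddCommGroup F] [NormedSpace 𝕜 F]

theorem ContinuousLinearMap.hasRightInverse_of_range_eq_top [CompleteSpace E] [CompleteSpace F]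
    {A : E →L[𝕜] F} (hA : LinearMap.range (A : E →ₗ[𝕜] F) = ⊤)
    (hker : (LinearMap.ker (A : E →ₗ[𝕜] F)).ClosedComplemented) : A.HasRightInverse := by
  obtain ⟨P, hP⟩ := hker
  have := A.isClosed_ker.completeSpace_coe
  let e := A.equivProdOfSurjectiveOfIsCompl P hA (LinearMap.range_eq_of_proj hP)
    (LinearMap.isCompl_of_proj hP)
  exact ⟨(e.symm : F × LinearMap.ker (A : E →ₗ[𝕜] F) →L[𝕜] E).comp (.inl 𝕜 F _),
    fun y ↦ congr_arg Prod.fst (e.apply_symm_apply (y, 0))⟩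

variable [CompleteSpace F] {Λ : Type*} [TopologicalSpace Λ]

theorem eventually_isUnit_comp_of_rightInverse {A : Λ → E →L[𝕜] F} {l₀ : Λ}
    (hA : ContinuousAt A l₀) {S : F →L[𝕜] E} (hS : RightInverse S (A l₀)) :
    ∀ᶠ l in 𝓝 l₀, IsUnit ((A l).comp S) := by
  have hcomp : ContinuousAt (fun l ↦ (A l).comp S) l₀ := hA.clm_comp continuousAt_const
  have hone : (A l₀).comp S = 1 := ContinuousLinearMap.ext hS
  exact hcomp.eventually_mem (Units.isOpen.mem_nhds (by simp [hone]))

theorem eventually_surjective_of_hasRightInverse {A : Λ → E →L[𝕜] F} {l₀ : Λ}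
    (hA : ContinuousAt A l₀) (hA₀ : (A l₀).HasRightInverse) :
    ∀ᶠ l in 𝓝 l₀, Surjective (A l) := by
  obtain ⟨S, hS⟩ := hA₀
  filter_upwards [eventually_isUnit_comp_of_rightInverse hA hS] with l hl
  exact Surjective.of_comp (ContinuousLinearEquiv.unitsEquiv 𝕜 F hl.unit).surjective

theorem exists_continuousOn_bijOn_ker {A : Λ → E →L[𝕜] F} (hA : Continuous A) {l₀ : Λ}
    (hA₀ : (A l₀).HasRightInverse) :
    ∃ U ∈ 𝓝 l₀, ∃ Φ : Λ → E →L[𝕜] E, ContinuousOn Φ U ∧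
      ∀ l ∈ U, BijOn (Φ l) (LinearMap.ker (A l₀ : E →ₗ[𝕜] F))
        (LinearMap.ker (A l : E →ₗ[𝕜] F)) := by
  obtain ⟨S, hS⟩ := hA₀
  let S' : Λ → F →L[𝕜] E := fun l ↦ S.comp (Ring.inverse ((A l).comp S))
  refine ⟨{l | IsUnit ((A l).comp S)}, eventually_isUnit_comp_of_rightInverse hA.continuousAt hS,
    fun l ↦ .id 𝕜 E - (S' l).comp (A l), ?_, fun l hl ↦ ?_⟩
  · have hinv : ContinuousOn (fun l ↦ Ring.inverse ((A l).comp S)) {l | IsUnit ((A l).comp S)} :=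
      fun l hl ↦ ((NormedRing.inverse_continuousAt hl.unit).comp_of_eq
        (hA.clm_comp continuous_const).continuousAt hl.unit_spec.symm).continuousWithinAt
    exact continuousOn_const.sub ((continuousOn_const.clm_comp hinv).clm_comp hA.continuousOn)
  · have hS'l : RightInverse (S' l) (A l) := fun y ↦ by
      simpa [S'] using congr($(Ring.mul_inverse_cancel _ hl) y)
    have hrange : LinearMap.range (S' l : F →ₗ[𝕜] E) = LinearMap.range (S : F →ₗ[𝕜] E) := by
      refine LinearMap.range_comp_of_range_eq_top _
        (LinearMap.range_eq_top.2 fun y ↦ ⟨(A l).comp S y, ?_⟩)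
      simpa using congr($(Ring.inverse_mul_cancel _ hl) y)
    exact LinearMap.bijOn_ker_of_range_rightInverse_eq (A := A l₀) (S := S) hS hS'l hrange.symm

end Perturbation

section Fredholm

variable {𝕜 E F : Type*} [RCLike 𝕜] [NormedAddCommGroup E] [NormedSpace 𝕜 E] [CompleteSpace E]
  [NormedAddCommGroup F] [NormedSpace 𝕜 F] [CompleteSpace F] {Λ : Type*} [TopologicalSpace Λ]

theorem exists_finiteDimensional_eventually_sup_eq_top {L : Λ → E →L[𝕜] F} {l₀ : Λ}
    (hL : ContinuousAt L l₀) [FiniteDimensional 𝕜 (LinearMap.ker (L l₀ : E →ₗ[𝕜] F))]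
    [FiniteDimensional 𝕜 (F ⧸ LinearMap.range (L l₀ : E →ₗ[𝕜] F))] :
    ∃ V : Submodule 𝕜 F, FiniteDimensional 𝕜 V ∧
      ∀ᶠ l in 𝓝 l₀, LinearMap.range (L l : E →ₗ[𝕜] F) ⊔ V = ⊤ := by
  obtain ⟨V, hV⟩ := (LinearMap.range (L l₀ : E →ₗ[𝕜] F)).exists_isCompl
  have : FiniteDimensional 𝕜 V := (Submodule.quotientEquivOfIsCompl _ _ hV).finiteDimensional
  let T : Λ → E × V →L[𝕜] F := fun l ↦ (L l).coprod V.subtypeL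
  have hT : ContinuousAt T l₀ :=
    (ContinuousLinearMap.coprodEquivL 𝕜).continuous.continuousAt.comp
      (hL.prodMk continuousAt_const)
  have hrange : ∀ l, LinearMap.range (T l : E × V →ₗ[𝕜] F) =
      LinearMap.range (L l : E →ₗ[𝕜] F) ⊔ V := fun l ↦ by
    simp [T, LinearMap.range_coprod]
  have hker : LinearMap.ker (T l₀ : E × V →ₗ[𝕜] F) =
      (LinearMap.ker (L l₀ : E →ₗ[𝕜] F)).map (LinearMap.inl 𝕜 E V) := by
    simp [T, LinearMap.ker_coprod_of_disjoint_range, hV.disjoint, Submodule.map_inl]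
  have hT₀ : (T l₀).HasRightInverse :=
    ContinuousLinearMap.hasRightInverse_of_range_eq_top (by rw [hrange, hV.sup_eq_top])
      (by rw [hker]; exact .of_finiteDimensional _)
  refine ⟨V, this, ?_⟩
  filter_upwards [eventually_surjective_of_hasRightInverse hT hT₀] with l hl
  rw [← hrange, LinearMap.range_eq_top]
  exact hl

theorem exists_finiteDimensional_sup_eq_top [CompactSpace Λ] {L : Λ → E →L[𝕜] F}
    (hL : Continuous L) (hker : ∀ l, FiniteDimensional 𝕜 (LinearMap.ker (L l : E →ₗ[𝕜] F)))
    (hcoker : ∀ l, FiniteDimensional 𝕜 (F ⧸ LinearMap.range (L l : E →ₗ[𝕜] F))) :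
    ∃ V : Submodule 𝕜 F, FiniteDimensional 𝕜 V ∧
      ∀ l, LinearMap.range (L l : E →ₗ[𝕜] F) ⊔ V = ⊤ := by
  choose V hV hev using fun l ↦ have := hker l; have := hcoker l
    exists_finiteDimensional_eventually_sup_eq_top (L := L) (l₀ := l) hL.continuousAt
  obtain ⟨t, -, hcover⟩ := isCompact_univ.elim_nhds_subcover _ fun l _ ↦ hev l
  refine ⟨t.sup V, Submodule.finiteDimensional_finset_sup t V, fun l ↦ ?_⟩
  obtain ⟨i, hi, hl⟩ := mem_iUnion₂.1 (hcover (mem_univ l))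
  exact top_unique (hl.symm.le.trans (sup_le_sup_left (Finset.le_sup hi) _))

theorem exists_continuousOn_bijOn_comap {L : Λ → E →L[𝕜] F} (hL : Continuous L)
    (V : Submodule 𝕜 F) [FiniteDimensional 𝕜 V] {l₀ : Λ}
    [FiniteDimensional 𝕜 (LinearMap.ker (L l₀ : E →ₗ[𝕜] F))]
    (hV : LinearMap.range (L l₀ : E →ₗ[𝕜] F) ⊔ V = ⊤) :
    ∃ U ∈ 𝓝 l₀, ∃ Φ : Λ → E →L[𝕜] E, ContinuousOn Φ U ∧
      ∀ l ∈ U, BijOn (Φ l) (V.comap (L l₀ : E →ₗ[𝕜] F)) (V.comap (L l : E →ₗ[𝕜] F)) := by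
  have : IsClosed (V : Set F) := V.closed_of_finiteDimensional
  have := V.finiteDimensional_comap (L l₀ : E →ₗ[𝕜] F)
  let A : Λ → E →L[𝕜] F ⧸ V := fun l ↦ V.mkQL.comp (L l)
  have hker : ∀ l, LinearMap.ker (A l : E →ₗ[𝕜] F ⧸ V) = V.comap (L l : E →ₗ[𝕜] F) :=
    fun l ↦ by ext; simp [A, Submodule.Quotient.mk_eq_zero]
  have hA₀ : (A l₀).HasRightInverse := by
    refine ContinuousLinearMap.hasRightInverse_of_range_eq_top ?_
      (hker l₀ ▸ .of_finiteDimensional _)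
    rw [ContinuousLinearMap.toLinearMap_comp, LinearMap.range_comp, Submodule.toLinearMap_mkQL,
      Submodule.map_mkQ_eq_top, sup_comm, hV]
  obtain ⟨U, hU, Φ, hΦ, hbij⟩ :=
    exists_continuousOn_bijOn_ker (A := A) (continuous_const.clm_comp hL) hA₀
  exact ⟨U, hU, Φ, hΦ, fun l hl ↦ hker l₀ ▸ hker l ▸ hbij l hl⟩

end Fredholm

/-- For a continuous family `L : Λ → Φ₀(X, Y)` of index-`0` Fredholm
operators parametrized by a compact space `Λ`, there is a finite-dimensional subspace
`V ⊆ Y` with `Im L_λ + V = Y` for all `λ`; then `E_λ = L_λ⁻¹(V)` has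
`dim E_λ = dim V` for all `λ` and defines a vector bundle over `Λ`: locally, the fibers
`E_λ` are carried isomorphically onto the fixed fiber `E_{λ₀}` by a continuous family of
operators. -/
theorem index_bundle_exists
    (Λ : Type*) [TopologicalSpace Λ] [CompactSpace Λ]
    (L : Λ → X →L[ℝ] Y) (hL : Continuous L) (hFred : ∀ l, IsFredholmIdxZero (L l)) :
    ∃ V : Submodule ℝ Y, FiniteDimensional ℝ V ∧
      (∀ l : Λ, LinearMap.range ((L l) : X →ₗ[ℝ] Y) ⊔ V = ⊤) ∧
      (∀ l : Λ, Module.finrank ℝ (Submodule.comap ((L l) : X →ₗ[ℝ] Y) V) =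
        Module.finrank ℝ V) ∧
      ∀ l₀ : Λ, ∃ U ∈ nhds l₀, ∃ Φ : Λ → X →L[ℝ] X,
        ContinuousOn Φ U ∧
        ∀ l ∈ U, Set.BijOn (Φ l)
          ((Submodule.comap ((L l₀) : X →ₗ[ℝ] Y) V : Submodule ℝ X) : Set X)
          ((Submodule.comap ((L l) : X →ₗ[ℝ] Y) V : Submodule ℝ X) : Set X) := by
  obtain ⟨V, hVfin, hV⟩ :=
    exists_finiteDimensional_sup_eq_top hL (fun l ↦ (hFred l).1) (fun l ↦ (hFred l).2.2.1)
  refine ⟨V, hVfin, hV, fun l ↦ ?_, fun l₀ ↦ ?_⟩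
  · obtain ⟨hker, -, -, hindex⟩ := hFred l
    have := finrank_comap_add_finrank_quotient_range (L l : X →ₗ[ℝ] Y) V (hV l)
    omega
  · have := (hFred l₀).1
    exact exists_continuousOn_bijOn_comap hL V (hV l₀)
end
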